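/- With the hypotheses of the previous setting (g Lorentzian on V of dimension 2m+2, N a maximally totally null complex subspace of V⊗ℂ with N^⊥ = N), there exists a real null line R ⊆ V such that R⊗ℂ = N ∩ conj(N), and moreover the g-orthogonal complement of R in V satisfies R^⊥ ⊗ ℂ = N + conj(N). -/

import Mathlib

open TensorProduct

/-- The complex-conjugation map on the complexification `ℂ ⊗[ℝ] V`,
induced by complex conjugation on `ℂ`. -/
noncomputable def complexificationConj (V : Type*) [AddCommGroup V] [Module ℝ V] :
    ℂ ⊗[ℝ] V →ₗ[ℝ] ℂ ⊗[ℝ] V :=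
  TensorProduct.map Complex.conjAe.toLinearMap LinearMap.id

namespace RobinsonAux

variable {V : Type*} [AddCommGroup V] [Module ℝ V]

lemma conj_tmul (c : ℂ) (v : V) :
    complexificationConj V (c ⊗ₜ[ℝ] v) = (starRingEnd ℂ) c ⊗ₜ[ℝ] v := rfl

lemma conj_conj (x : ℂ ⊗[ℝ] V) :
    complexificationConj V (complexificationConj V x) = x := by
  induction x using TensorProduct.induction_on with
  | zero => simp
  | tmul c v => simp [conj_tmul]
  | add a b ha hb => simp [map_add, ha, hb]

lemma conj_smul (c : ℂ) (x : ℂ ⊗[ℝ] V) :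
    complexificationConj V (c • x) = (starRingEnd ℂ) c • complexificationConj V x := by
  induction x using TensorProduct.induction_on with
  | zero => simp
  | tmul c' v => rw [smul_tmul', conj_tmul, conj_tmul, smul_tmul', smul_eq_mul, smul_eq_mul, map_mul]
  | add a b ha hb => simp [map_add, smul_add, ha, hb]

lemma exists_decomp (x : ℂ ⊗[ℝ] V) : ∃ u v : V,
    x = 1 ⊗ₜ[ℝ] u + Complex.I • ((1:ℂ) ⊗ₜ[ℝ] v) ∧
    complexificationConj V x = 1 ⊗ₜ[ℝ] u - Complex.I • ((1:ℂ) ⊗ₜ[ℝ] v) := by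
  induction x using TensorProduct.induction_on with
  | zero => exact ⟨0, 0, by simp, by simp⟩
  | tmul c v =>
    refine ⟨c.re • v, c.im • v, ?_, ?_⟩
    · rw [tmul_smul, tmul_smul, ← algebraMap_smul ℂ c.re, ← algebraMap_smul ℂ c.im, smul_smul,
        ← add_smul, smul_tmul', smul_eq_mul, mul_one]
      congr 1
      simp [Complex.ext_iff]
    · rw [conj_tmul, tmul_smul, tmul_smul, ← algebraMap_smul ℂ c.re, ← algebraMap_smul ℂ c.im,
        smul_smul, ← sub_smul, smul_tmul', smul_eq_mul, mul_one]
      congr 1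
      simp [Complex.ext_iff]
  | add a b ha hb =>
    obtain ⟨u1, v1, h1, h1'⟩ := ha
    obtain ⟨u2, v2, h2, h2'⟩ := hb
    refine ⟨u1 + u2, v1 + v2, ?_, ?_⟩
    · rw [h1, h2, tmul_add, tmul_add, smul_add]; abel
    · rw [map_add, h1', h2', tmul_add, tmul_add, smul_add]; abel

lemma gC_conj (g : LinearMap.BilinForm ℝ V) (x y : ℂ ⊗[ℝ] V) :
    (g.baseChange ℂ) (complexificationConj V x) (complexificationConj V y)
      = (starRingEnd ℂ) ((g.baseChange ℂ) x y) := by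
  induction x using TensorProduct.induction_on with
  | zero => simp
  | tmul c v =>
    induction y using TensorProduct.induction_on with
    | zero => simp
    | tmul c' v' =>
      rw [conj_tmul, conj_tmul, LinearMap.BilinForm.baseChange_tmul,
        LinearMap.BilinForm.baseChange_tmul]
      simp [Complex.real_smul, map_mul]
    | add a b ha hb => simp only [map_add, ha, hb]
  | add a b ha hb => simp only [map_add, LinearMap.add_apply, ha, hb]

lemma gC_tmul_one (g : LinearMap.BilinForm ℝ V) (u v : V) :
    (g.baseChange ℂ) ((1:ℂ) ⊗ₜ[ℝ] u) ((1:ℂ) ⊗ₜ[ℝ] v) = (g u v : ℂ) := by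
  rw [LinearMap.BilinForm.baseChange_tmul]
  simp [Complex.real_smul]

lemma gC_expand (g : LinearMap.BilinForm ℝ V) (u v u' v' : V) :
    (g.baseChange ℂ) ((1:ℂ) ⊗ₜ[ℝ] u + Complex.I • ((1:ℂ) ⊗ₜ[ℝ] v))
        ((1:ℂ) ⊗ₜ[ℝ] u' + Complex.I • ((1:ℂ) ⊗ₜ[ℝ] v'))
      = ((g u u' - g v v' : ℝ) : ℂ) + ((g u v' + g v u' : ℝ) : ℂ) * Complex.I := by
  simp only [map_add, map_smul, LinearMap.add_apply, LinearMap.smul_apply, smul_eq_mul,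
    gC_tmul_one]
  have hI : Complex.I * Complex.I = -1 := Complex.I_mul_I
  push_cast
  ring_nf
  rw [Complex.I_sq]
  ring

lemma gC_expand_left (g : LinearMap.BilinForm ℝ V) (u v w : V) :
    (g.baseChange ℂ) ((1:ℂ) ⊗ₜ[ℝ] u + Complex.I • ((1:ℂ) ⊗ₜ[ℝ] v)) ((1:ℂ) ⊗ₜ[ℝ] w)
      = (g u w : ℂ) + (g v w : ℂ) * Complex.I := by
  simp only [map_add, map_smul, LinearMap.add_apply, LinearMap.smul_apply, smul_eq_mul,
    gC_tmul_one]
  ring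

lemma gC_expand_right (g : LinearMap.BilinForm ℝ V) (w u v : V) :
    (g.baseChange ℂ) ((1:ℂ) ⊗ₜ[ℝ] w) ((1:ℂ) ⊗ₜ[ℝ] u + Complex.I • ((1:ℂ) ⊗ₜ[ℝ] v))
      = (g w u : ℂ) + (g w v : ℂ) * Complex.I := by
  simp only [map_add, map_smul, smul_eq_mul, gC_tmul_one]
  ring

/-- Galois-type descent: a conjugation-stable complex submodule of the complexification
is the base change of its real points. -/
lemma baseChange_realPoints (W : Submodule ℂ (ℂ ⊗[ℝ] V))
    (hW : ∀ x ∈ W, complexificationConj V x ∈ W) :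
    ((W.restrictScalars ℝ).comap (TensorProduct.mk ℝ ℂ V 1)).baseChange ℂ = W := by
  apply le_antisymm
  · rw [Submodule.baseChange_eq_span, Submodule.span_le]
    rintro - ⟨w, hw, rfl⟩
    exact hw
  · intro x hx
    obtain ⟨u, v, hdec, hcdec⟩ := exists_decomp x
    have hσx := hW x hx
    have hu : (1:ℂ) ⊗ₜ[ℝ] u ∈ W := by
      have h : (1:ℂ) ⊗ₜ[ℝ] u = (2⁻¹ : ℂ) • (x + complexificationConj V x) := by
        rw [hcdec, hdec]; module
      rw [h]; exact W.smul_mem _ (W.add_mem hx hσx)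
    have hv : (1:ℂ) ⊗ₜ[ℝ] v ∈ W := by
      have h2 : x - complexificationConj V x = (2 * Complex.I) • ((1:ℂ) ⊗ₜ[ℝ] v) := by
        rw [hcdec, hdec]; module
      have h3 : ((2 * Complex.I)⁻¹) • (x - complexificationConj V x) = (1:ℂ) ⊗ₜ[ℝ] v := by
        rw [h2, smul_smul, inv_mul_cancel₀ (by simp [Complex.I_ne_zero]), one_smul]
      rw [← h3]; exact W.smul_mem _ (W.sub_mem hx hσx)
    rw [hdec]
    exact Submodule.add_mem _ (Submodule.tmul_mem_baseChange_of_mem 1 hu)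
      (Submodule.smul_mem _ _ (Submodule.tmul_mem_baseChange_of_mem 1 hv))

/-- The identity, as an `ℝ`-linear equivalence between a complex submodule with scalars
restricted and the submodule itself. -/
noncomputable def restrictScalarsREquiv (W : Submodule ℂ (ℂ ⊗[ℝ] V)) :
    (W.restrictScalars ℝ) ≃ₗ[ℝ] W :=
  { AddEquiv.refl (W.restrictScalars ℝ) with map_smul' := fun _ _ => rfl }

section coord
open Finset

variable {m : ℕ} (g : LinearMap.BilinForm ℝ V) (e : Module.Basis (Fin (2 * m + 2)) ℝ V)
  (he : ∀ i j, g (e i) (e j) = if i = j then (if i = (0 : Fin (2 * m + 2)) then 1 else -1) else 0)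

include he in
lemma gform (u v : V) :
    g u v = e.repr u 0 * e.repr v 0
      - ∑ i ∈ Finset.univ.erase (0 : Fin (2*m+2)), e.repr u i * e.repr v i := by
  have h1 : g u v = ∑ i, e.repr u i * e.repr v i * (if i = 0 then (1:ℝ) else -1) := by
    conv_lhs => rw [← e.sum_repr u, ← e.sum_repr v]
    rw [map_sum]
    rw [Finset.sum_congr rfl (fun j _ => ?_)]
    rw [map_smul, smul_eq_mul, map_sum, LinearMap.coe_sum, Finset.sum_apply]
    rw [Finset.sum_congr rfl (fun i _ => by
      rw [map_smul, LinearMap.smul_apply, smul_eq_mul, he i j])]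
    rw [Finset.sum_congr rfl (fun i _ => by rw [mul_ite, mul_zero]),
      Finset.sum_ite_eq', if_pos (Finset.mem_univ j)]
    ring
  rw [h1, ← Finset.add_sum_erase _ _ (Finset.mem_univ (0 : Fin (2*m+2))), if_pos rfl, mul_one,
    Finset.sum_congr rfl (fun i hi => by rw [if_neg (Finset.mem_erase.mp hi).1]),
    sub_eq_add_neg, ← Finset.sum_neg_distrib]
  exact congrArg _ (Finset.sum_congr rfl (fun i _ => by ring))

include he in
lemma no_two_timelike (u v : V) (huv : g u v = 0) (hu : 0 < g u u) (hv : 0 < g v v) : False := by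
  have hu' := hu; have hv' := hv; have huv' := huv
  rw [gform g e he] at huv' hu' hv'
  set a : Fin (2*m+2) → ℝ := fun i => e.repr u i with ha
  set b : Fin (2*m+2) → ℝ := fun i => e.repr v i with hb
  set s := Finset.univ.erase (0 : Fin (2*m+2)) with hs
  have h1 : a 0 * b 0 = ∑ i ∈ s, a i * b i := by linarith
  have hcs := Finset.sum_mul_sq_le_sq_mul_sq s a b
  have haa : ∑ i ∈ s, a i ^ 2 < a 0 ^ 2 := by
    have h : ∑ i ∈ s, a i ^ 2 = ∑ i ∈ s, a i * a i := Finset.sum_congr rfl fun i _ => by ring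
    rw [h, sq]; linarith
  have hbb : ∑ i ∈ s, b i ^ 2 < b 0 ^ 2 := by
    have h : ∑ i ∈ s, b i ^ 2 = ∑ i ∈ s, b i * b i := Finset.sum_congr rfl fun i _ => by ring
    rw [h, sq]; linarith
  have ha2 : (0:ℝ) ≤ ∑ i ∈ s, a i ^ 2 := Finset.sum_nonneg fun i _ => sq_nonneg _
  have hb2 : (0:ℝ) ≤ ∑ i ∈ s, b i ^ 2 := Finset.sum_nonneg fun i _ => sq_nonneg _
  have hh : (a 0 * b 0) ^ 2 ≤ (∑ i ∈ s, a i ^ 2) * ∑ i ∈ s, b i ^ 2 := by rw [h1]; exact hcs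
  nlinarith [sq_nonneg (a 0), sq_nonneg (b 0)]

include he in
lemma null_no_time_eq_zero (w : V) (hw : g w w = 0) (h0 : e.repr w 0 = 0) : w = 0 := by
  rw [gform g e he, h0] at hw
  have hz : ∀ i ∈ Finset.univ.erase (0 : Fin (2*m+2)), e.repr w i * e.repr w i = 0 :=
    (Finset.sum_eq_zero_iff_of_nonneg (fun i _ => mul_self_nonneg (e.repr w i))).mp (by linarith)
  have h : e.repr w = 0 := by
    ext i
    by_cases h : i = 0
    · rw [h]; exact h0
    · exact mul_self_eq_zero.mp (hz i (Finset.mem_erase.mpr ⟨h, Finset.mem_univ i⟩))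
  exact e.repr.map_eq_zero_iff.mp h

include he in
lemma g_nondeg (x : V) (hx : ∀ y, g y x = 0) : x = 0 := by
  have h : e.repr x = 0 := by
    ext i
    have h := hx (e i)
    rw [show x = ∑ j, e.repr x j • e j from (e.sum_repr x).symm, map_sum] at h
    rw [Finset.sum_congr rfl (fun j _ => by rw [map_smul, smul_eq_mul, he i j])] at h
    rw [Finset.sum_congr rfl (fun j _ => by rw [mul_ite, mul_zero]),
      Finset.sum_ite_eq, if_pos (Finset.mem_univ i)] at h
    by_cases h0 : i = 0
    · rw [if_pos h0, mul_one] at h; rw [h]; rfl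
    · rw [if_neg h0] at h; simpa using h
  exact e.repr.map_eq_zero_iff.mp h

end coord

end RobinsonAux

open RobinsonAux in
set_option maxHeartbeats 1600000 in
/-- for a maximally totally null complex subspace `N` (`N^⊥ = N`) of the
complexification of a Lorentzian vector space `(V,g)` of dimension `2m+2`, there exists a
real null line `R ⊆ V` with `R ⊗ ℂ = N ∩ conj N`, and moreover `R^⊥ ⊗ ℂ = N + conj N`. -/
theorem robinson_real_null_line (m : ℕ) (V : Type*) [AddCommGroup V] [Module ℝ V]
    [FiniteDimensional ℝ V] (hdim : Module.finrank ℝ V = 2 * m + 2)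
    (g : LinearMap.BilinForm ℝ V)
    (hsym : ∀ x y : V, g x y = g y x)
    (hsig : ∃ e : Module.Basis (Fin (2 * m + 2)) ℝ V,
      ∀ i j, g (e i) (e j) = if i = j then (if i = (0 : Fin (2 * m + 2)) then 1 else -1) else 0)
    (N : Submodule ℂ (ℂ ⊗[ℝ] V))
    (hrank : Module.finrank ℂ N = m + 1)
    (hnull : (LinearMap.BilinForm.baseChange ℂ g).orthogonal N = N) :
    ∃ R : Submodule ℝ V,
      Module.finrank ℝ R = 1 ∧
      (∀ x ∈ R, g x x = 0) ∧
      R.baseChange ℂ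
        = N ⊓ Submodule.span ℂ (complexificationConj V '' (N : Set (ℂ ⊗[ℝ] V))) ∧
      (g.orthogonal R).baseChange ℂ
        = N ⊔ Submodule.span ℂ (complexificationConj V '' (N : Set (ℂ ⊗[ℝ] V))) := by
  classical
  obtain ⟨e, he⟩ := hsig
  set σ : ℂ ⊗[ℝ] V →ₗ[ℝ] ℂ ⊗[ℝ] V := complexificationConj V with hσdef
  set gC := LinearMap.BilinForm.baseChange ℂ g with hgCdef
  set N' := Submodule.span ℂ (complexificationConj V '' (N : Set (ℂ ⊗[ℝ] V))) with hN'def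
  -- membership in N'
  have himage : ∀ x ∈ N', x ∈ complexificationConj V '' (N : Set (ℂ ⊗[ℝ] V)) := by
    intro x hx
    induction hx using Submodule.span_induction with
    | mem x h => exact h
    | zero => exact ⟨0, N.zero_mem, map_zero _⟩
    | add a b _ _ ha hb =>
      obtain ⟨y, hy, rfl⟩ := ha; obtain ⟨z, hz, rfl⟩ := hb
      exact ⟨y + z, N.add_mem hy hz, map_add _ _ _⟩
    | smul c x _ hx =>
      obtain ⟨y, hy, rfl⟩ := hx
      exact ⟨(starRingEnd ℂ) c • y, N.smul_mem _ hy, by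
        rw [conj_smul, RingHomCompTriple.comp_apply]
        simp [Complex.conj_conj]⟩
  have hmemN' : ∀ x, x ∈ N' ↔ complexificationConj V x ∈ N := by
    intro x
    constructor
    · intro hx
      obtain ⟨y, hy, rfl⟩ := himage x hx
      rw [conj_conj]; exact hy
    · intro hx
      have : x = complexificationConj V (complexificationConj V x) := (conj_conj x).symm
      rw [this]
      exact Submodule.subset_span ⟨_, hx, rfl⟩
  have hgsym : gC.IsSymm := LinearMap.BilinForm.isSymm_iff.mpr (LinearMap.BilinForm.IsSymm.baseChange ℂ
    (LinearMap.BilinForm.isSymm_iff.mp ⟨fun x y => hsym x y⟩))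
  have hgrefl : gC.IsRefl := hgsym.isRefl
  -- elements of N pair to zero
  have hNN : ∀ a ∈ N, ∀ b ∈ N, gC a b = 0 := by
    intro a ha b hb
    rw [← hnull] at hb
    exact hb a ha
  -- orthogonal of N'
  have horthN' : gC.orthogonal N' = N' := by
    ext x
    rw [LinearMap.BilinForm.mem_orthogonal_iff, hmemN']
    constructor
    · intro h
      rw [← hnull, LinearMap.BilinForm.mem_orthogonal_iff]
      intro n hn
      have h1 : gC (complexificationConj V n) x = 0 := by
        apply h
        rw [hmemN', conj_conj]
        exact hn
      have h2 := gC_conj g n (complexificationConj V x)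
      rw [conj_conj] at h2
      have : (starRingEnd ℂ) (gC n (complexificationConj V x)) = 0 := by rw [← h2]; exact h1
      exact star_eq_zero.mp this
    · intro h n hn
      have hσn : complexificationConj V n ∈ N := (hmemN' n).mp hn
      have h2 := gC_conj g n x
      have h3 : gC (complexificationConj V n) (complexificationConj V x) = 0 :=
        hNN _ hσn _ h
      rw [h3] at h2
      exact star_eq_zero.mp h2.symm
  have hN'N' : ∀ a ∈ N', ∀ b ∈ N', gC a b = 0 := by
    intro a ha b hb
    rw [← horthN'] at hb
    exact hb a ha
  -- nondegeneracy of gC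
  have hgnd : gC.Nondegenerate := by
    suffices hL : ∀ x, (∀ y, gC x y = 0) → x = 0 from
      ⟨hL, fun y hy => hL y (fun z => by rw [hgsym.eq]; exact hy z)⟩
    intro x hx
    obtain ⟨u, v, hdec, _⟩ := exists_decomp x
    have key : ∀ w, g u w = 0 ∧ g v w = 0 := by
      intro w
      have h := hx ((1:ℂ) ⊗ₜ[ℝ] w)
      rw [hdec, gC_expand_left] at h
      constructor
      · have := congrArg Complex.re h; simpa using this
      · have := congrArg Complex.im h; simpa using this
    have hu : u = 0 := g_nondeg g e he u (fun y => by rw [hsym]; exact (key y).1)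
    have hv : v = 0 := g_nondeg g e he v (fun y => by rw [hsym]; exact (key y).2)
    rw [hdec, hu, hv]; simp
  -- the "Hermitian form" is nonpositive on N
  have hHaux : ∀ x ∈ N, ∃ r : ℝ, gC x (complexificationConj V x) = (r : ℂ) ∧ r ≤ 0 := by
    intro x hx
    obtain ⟨u, v, hdec, hcdec⟩ := exists_decomp x
    have hx0 : gC x x = 0 := hNN x hx x hx
    rw [hdec, gC_expand] at hx0
    have hre : g u u - g v v = 0 := by
      have := congrArg Complex.re hx0; simpa using this
    have him : g u v + g v u = 0 := by
      have := congrArg Complex.im hx0; simpa using this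
    have huv : g u v = 0 := by have := hsym u v; linarith
    have hcdec' : complexificationConj V x
        = (1:ℂ) ⊗ₜ[ℝ] u + Complex.I • ((1:ℂ) ⊗ₜ[ℝ] (-v)) := by
      rw [hcdec, tmul_neg, smul_neg, sub_eq_add_neg]
    refine ⟨g u u + g v v, ?_, ?_⟩
    · rw [hcdec', hdec, gC_expand]
      have h1 : g u (-v) = -g u v := by simp
      have h2 : g v (-v) = -g v v := by simp
      rw [h1, h2, huv]
      have hvu : g v u = 0 := by rw [hsym]; exact huv
      rw [hvu]
      push_cast
      ring
    · by_contra hpos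
      push_neg at hpos
      have hguu : 0 < g u u := by linarith
      have hgvv : 0 < g v v := by linarith
      exact no_two_timelike g e he u v huv hguu hgvv
  -- same on N'
  have hHaux' : ∀ x ∈ N', ∃ r : ℝ, gC x (complexificationConj V x) = (r : ℂ) ∧ r ≤ 0 := by
    intro x hx
    obtain ⟨r, hr, hr0⟩ := hHaux (complexificationConj V x) ((hmemN' x).mp hx)
    rw [conj_conj] at hr
    refine ⟨r, ?_, hr0⟩
    have := gC_conj g (complexificationConj V x) x
    rw [conj_conj] at this
    rw [← hgsym.eq x (complexificationConj V x)] at hr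
    exact hr
  -- cross terms vanish
  have hcross : ∀ x ∈ N, ∀ y ∈ N', gC x (complexificationConj V y) = 0 := by
    intro x hx y hy
    exact hNN x hx _ ((hmemN' y).mp hy)
  have hcross' : ∀ x ∈ N, ∀ y ∈ N', gC y (complexificationConj V x) = 0 := by
    intro x hx y hy
    apply hN'N' y hy
    rw [hmemN', conj_conj]
    exact hx
  -- nonpositivity on the sup
  have hsup : ∀ x ∈ N ⊔ N', ∃ r : ℝ, gC x (complexificationConj V x) = (r : ℂ) ∧ r ≤ 0 := by
    intro x hx
    obtain ⟨y, hy, z, hz, rfl⟩ := Submodule.mem_sup.mp hx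
    obtain ⟨r1, hr1, hr10⟩ := hHaux y hy
    obtain ⟨r2, hr2, hr20⟩ := hHaux' z hz
    refine ⟨r1 + r2, ?_, by linarith⟩
    rw [map_add, map_add, LinearMap.add_apply, map_add, map_add]
    rw [hr1, hr2, hcross y hy z hz, hcross' y hy z hz]
    push_cast
    ring
  -- the timelike vector is not in the sup
  have htime : (1:ℂ) ⊗ₜ[ℝ] (e 0) ∉ N ⊔ N' := by
    intro hmem
    obtain ⟨r, hr, hr0⟩ := hsup _ hmem
    rw [conj_tmul, map_one, gC_tmul_one, he 0 0, if_pos rfl, if_pos rfl] at hr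
    have h1 : r = 1 := by exact_mod_cast hr.symm
    linarith
  -- conjugation-stability of the intersection
  have hstable : ∀ x ∈ N ⊓ N', complexificationConj V x ∈ N ⊓ N' := by
    intro x hx
    rw [Submodule.mem_inf] at hx ⊢
    obtain ⟨h1, h2⟩ := hx
    exact ⟨(hmemN' x).mp h2, (hmemN' _).mpr (by rw [conj_conj]; exact h1)⟩
  -- the real points
  set R : Submodule ℝ V :=
    (((N ⊓ N').restrictScalars ℝ).comap (TensorProduct.mk ℝ ℂ V 1)) with hRdef
  have hRbc : R.baseChange ℂ = N ⊓ N' := baseChange_realPoints (N ⊓ N') hstable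
  have hRnull : ∀ w ∈ R, g w w = 0 := by
    intro w hw
    have h1 : (1:ℂ) ⊗ₜ[ℝ] w ∈ N ⊓ N' := hw
    have h2 : gC ((1:ℂ) ⊗ₜ[ℝ] w) ((1:ℂ) ⊗ₜ[ℝ] w) = 0 := hNN _ h1.1 _ h1.1
    rw [gC_tmul_one] at h2
    exact_mod_cast h2
  -- dimension bookkeeping
  have hfinVC : Module.finrank ℂ (ℂ ⊗[ℝ] V) = 2 * m + 2 := by
    rw [Module.finrank_baseChange, hdim]
  have hSne : N ⊔ N' ≠ ⊤ := fun h => htime (h ▸ Submodule.mem_top)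
  have hSlt : Module.finrank ℂ (N ⊔ N' : Submodule ℂ (ℂ ⊗[ℝ] V)) < 2 * m + 2 := by
    rw [← hfinVC]
    exact Submodule.finrank_lt hSne
  -- finrank of N'
  have hσinj : Function.Injective (complexificationConj V) := by
    intro a b hab
    have := congrArg (complexificationConj V) hab
    rwa [conj_conj, conj_conj] at this
  have hmap : (N.restrictScalars ℝ).map (complexificationConj V) = N'.restrictScalars ℝ := by
    ext x
    simp only [Submodule.mem_map, Submodule.restrictScalars_mem]
    constructor
    · rintro ⟨y, hy, rfl⟩
      exact Submodule.subset_span ⟨y, hy, rfl⟩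
    · intro hx
      refine ⟨complexificationConj V x, (hmemN' x).mp hx, conj_conj x⟩
  have hrestr : ∀ W : Submodule ℂ (ℂ ⊗[ℝ] V),
      Module.finrank ℝ (W.restrictScalars ℝ) = 2 * Module.finrank ℂ W := by
    intro W
    have h1 : Module.finrank ℝ ℂ * Module.finrank ℂ W = Module.finrank ℝ W :=
      Module.finrank_mul_finrank ℝ ℂ W
    rw [Complex.finrank_real_complex] at h1
    rw [LinearEquiv.finrank_eq (restrictScalarsREquiv W)]
    omega
  have hrankN' : Module.finrank ℂ N' = m + 1 := by
    have h1 : Module.finrank ℝ (N.restrictScalars ℝ) = Module.finrank ℝ (N'.restrictScalars ℝ) := by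
      rw [← hmap]
      exact LinearEquiv.finrank_eq
        (Submodule.equivMapOfInjective (complexificationConj V) hσinj (N.restrictScalars ℝ))
    rw [hrestr N, hrestr N', hrank] at h1
    omega
  -- the intersection is nonzero
  have hMpos : 1 ≤ Module.finrank ℂ (N ⊓ N' : Submodule ℂ (ℂ ⊗[ℝ] V)) := by
    have h := Submodule.finrank_sup_add_finrank_inf_eq N N'
    rw [hrank, hrankN'] at h
    omega
  have hRne : R ≠ ⊥ := by
    intro h
    rw [h, Submodule.baseChange_bot] at hRbc
    rw [← hRbc, finrank_bot] at hMpos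
    omega
  -- R has dimension 1
  have hRfin : Module.finrank ℝ R = 1 := by
    have hle : Module.finrank ℝ R ≤ 1 := by
      have hinj : Function.Injective ((e.coord 0) ∘ₗ R.subtype) := by
        rw [← LinearMap.ker_eq_bot]
        rw [Submodule.eq_bot_iff]
        rintro ⟨w, hw⟩ hker
        have h0 : e.repr w 0 = 0 := hker
        have : w = 0 := null_no_time_eq_zero g e he w (hRnull w hw) h0
        exact Subtype.ext this
      have := LinearMap.finrank_le_finrank_of_injective hinj
      simpa using this
    have hge : 1 ≤ Module.finrank ℝ R := by
      rcases Nat.eq_zero_or_pos (Module.finrank ℝ R) with h | h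
      · exact absurd (Submodule.finrank_eq_zero.mp h) hRne
      · exact h
    omega
  -- orthogonal of the sup is the inf
  have horthsup : gC.orthogonal (N ⊔ N') = N ⊓ N' := by
    apply le_antisymm
    · intro x h
      rw [Submodule.mem_inf]
      constructor
      · rw [← hnull]
        intro n hn
        exact h n (Submodule.mem_sup_left hn)
      · rw [← horthN']
        intro n hn
        exact h n (Submodule.mem_sup_right hn)
    · intro x hx n hn
      obtain ⟨h1', h2'⟩ := Submodule.mem_inf.mp hx
      obtain ⟨y, hy, z, hz, rfl⟩ := Submodule.mem_sup.mp hn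
      have h1 : gC y x = 0 := hNN y hy x h1'
      have h2 : gC z x = 0 := hN'N' z hz x h2'
      rw [map_add, LinearMap.add_apply, h1, h2, add_zero]
  -- orthogonal of the base change of R
  have horthR : gC.orthogonal (R.baseChange ℂ) = (g.orthogonal R).baseChange ℂ := by
    apply le_antisymm
    · intro x hx
      obtain ⟨u, v, hdec, _⟩ := exists_decomp x
      have key : ∀ r ∈ R, g r u = 0 ∧ g r v = 0 := by
        intro r hr
        have h := hx ((1:ℂ) ⊗ₜ[ℝ] r) (Submodule.tmul_mem_baseChange_of_mem 1 hr)
        rw [hdec, gC_expand_right] at h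
        constructor
        · have := congrArg Complex.re h; simpa using this
        · have := congrArg Complex.im h; simpa using this
      have hu : u ∈ g.orthogonal R := by
        intro r hr
        exact (key r hr).1
      have hv : v ∈ g.orthogonal R := by
        intro r hr
        exact (key r hr).2
      rw [hdec]
      exact Submodule.add_mem _ (Submodule.tmul_mem_baseChange_of_mem 1 hu)
        (Submodule.smul_mem _ _ (Submodule.tmul_mem_baseChange_of_mem 1 hv))
    · rw [Submodule.baseChange_eq_span, Submodule.span_le]
      rintro - ⟨w, hw, rfl⟩
      intro n hn
      rw [Submodule.baseChange_eq_span] at hn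
      induction hn using Submodule.span_induction with
      | mem y h =>
        obtain ⟨r, hr, rfl⟩ := h
        have hgrw : g r w = 0 := hw r hr
        show gC (((TensorProduct.mk ℝ ℂ V) 1) r) (((TensorProduct.mk ℝ ℂ V) 1) w) = 0
        rw [TensorProduct.mk_apply, TensorProduct.mk_apply, gC_tmul_one]
        exact_mod_cast hgrw
      | zero => simp [LinearMap.BilinForm.IsOrtho]
      | add a b _ _ ha hb =>
        show gC (a + b) _ = 0
        rw [map_add, LinearMap.add_apply, ha, hb, add_zero]
      | smul c a _ ha =>
        show gC (c • a) _ = 0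
        rw [map_smul, LinearMap.smul_apply, ha, smul_zero]
  -- finish
  refine ⟨R, hRfin, hRnull, hRbc, ?_⟩
  rw [← horthR, hRbc, ← horthsup,
    LinearMap.BilinForm.orthogonal_orthogonal hgnd hgrefl]
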